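/- Fix q ∈ ℂ with q ≠ 0 and q not a root of unity. Let (e₋₁, e₁, A) be a Podleś representation on a finite-dimensional complex vector space V, either with parameter c ∈ ℂ, c ≠ 0, or with parameter ∞. If A is nilpotent, then both e₁ and e₋₁ are bijective. -/
import Mathlib


/-- A Podleś representation with parameter `c` on a complex vector space. -/
def PodlesRep (q c : ℂ) {V : Type*} [AddCommGroup V] [Module ℂ V]
    (em e1 A : Module.End ℂ V) : Prop :=
  em * e1 = A - A ^ 2 + c • (1 : Module.End ℂ V) ∧
  e1 * em = q ^ 2 • A - q ^ 4 • A ^ 2 + c • (1 : Module.End ℂ V) ∧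
  e1 * A = q ^ 2 • (A * e1) ∧
  em * A = (q ^ 2)⁻¹ • (A * em)

/-- A Podleś representation with parameter `∞` on a complex vector space. -/
def PodlesRepInf (q : ℂ) {V : Type*} [AddCommGroup V] [Module ℂ V]
    (em e1 A : Module.End ℂ V) : Prop :=
  em * e1 = 1 - A ^ 2 ∧
  e1 * em = 1 - q ^ 4 • A ^ 2 ∧
  e1 * A = q ^ 2 • (A * e1) ∧
  em * A = (q ^ 2)⁻¹ • (A * em)

/-- If `x*y` and `y*x` are both units in `Module.End`, then `x` and `y` are bijective. -/
lemma aux_bij {V : Type*} [AddCommGroup V] [Module ℂ V] (x y : Module.End ℂ V)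
    (hxy : IsUnit (x * y)) (hyx : IsUnit (y * x)) :
    Function.Bijective ⇑x ∧ Function.Bijective ⇑y := by
  have h1 := (Module.End.isUnit_iff _).mp hxy
  have h2 := (Module.End.isUnit_iff _).mp hyx
  refine ⟨⟨fun a b hab => ?_, fun v => ?_⟩, ⟨fun a b hab => ?_, fun v => ?_⟩⟩
  · exact h2.1 (by simp [Module.End.mul_apply, hab])
  · obtain ⟨w, hw⟩ := h1.2 v
    exact ⟨y w, hw⟩
  · exact h1.1 (by simp [Module.End.mul_apply, hab])
  · obtain ⟨w, hw⟩ := h2.2 v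
    exact ⟨x w, hw⟩

/-- For a finite-dimensional Podleś representation, either with parameter `c ≠ 0` or with
parameter `∞`, nilpotency of `A` implies that `e₁` and `e₋₁` are bijective. -/
theorem stmt4 {V : Type*} [AddCommGroup V] [Module ℂ V] [FiniteDimensional ℂ V]
    (q : ℂ) (hq : q ≠ 0) (hq' : ∀ n : ℕ, 0 < n → q ^ n ≠ 1)
    (em e1 A : Module.End ℂ V)
    (hrep : (∃ c : ℂ, c ≠ 0 ∧ PodlesRep q c em e1 A) ∨ PodlesRepInf q em e1 A)
    (hA : IsNilpotent A) :
    Function.Bijective ⇑e1 ∧ Function.Bijective ⇑em := by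
  have hA2 : IsNilpotent (A ^ 2) := by
    obtain ⟨n, hn⟩ := hA
    exact ⟨n, by rw [← pow_mul, mul_comm, pow_mul, hn, zero_pow (by norm_num)]⟩
  rcases hrep with ⟨c, hc, h1, h2, -, -⟩ | ⟨h1, h2, -, -⟩
  · have hcu : IsUnit (c • (1 : Module.End ℂ V)) := by
      rw [← Algebra.algebraMap_eq_smul_one]
      exact (isUnit_iff_ne_zero.mpr hc).map (algebraMap ℂ (Module.End ℂ V))
    have hn1 : IsNilpotent (A - A ^ 2) :=
      (Commute.pow_right (Commute.refl A) 2).isNilpotent_sub hA hA2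
    have hn2 : IsNilpotent (q ^ 2 • A - q ^ 4 • A ^ 2) := by
      refine Commute.isNilpotent_sub ?_ (hA.smul _) (hA2.smul _)
      exact ((Commute.pow_right (Commute.refl A) 2).smul_right _).smul_left _
    have hu1 : IsUnit (em * e1) := by
      rw [h1]; exact hn1.isUnit_add_right_of_commute hcu (Commute.symm (Commute.smul_left (Commute.one_left _) c))
    have hu2 : IsUnit (e1 * em) := by
      rw [h2]; exact hn2.isUnit_add_right_of_commute hcu (Commute.symm (Commute.smul_left (Commute.one_left _) c))
    obtain ⟨hx, hy⟩ := aux_bij e1 em hu2 hu1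
    exact ⟨hx, hy⟩
  · have hu1 : IsUnit (em * e1) := by rw [h1]; exact hA2.isUnit_one_sub
    have hu2 : IsUnit (e1 * em) := by rw [h2]; exact (hA2.smul (q ^ 4)).isUnit_one_sub
    obtain ⟨hx, hy⟩ := aux_bij e1 em hu2 hu1
    exact ⟨hx, hy⟩
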